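/- arXiv:2501.03297 — 7 statements merged into one kernel-verified Lean document; each statement's English description precedes it below -/
import Mathlib

section
/- Reducibility semantics consequence over a base is monotonic under base extension: Γ ⊨ᵅ_{B,n} A if and only if Γ ⊨ᵅ_{C,n} A for all C ⊇ₙ B. -/
inductive PAtom : Type
  | bot
  | prop (n : ℕ)

inductive Formula : Type
  | atom (a : PAtom)
  | conj (f g : Formula)
  | disj (f g : Formula)
  | imp (f g : Formula)

/-- reducibility semantics consequence over a base is monotonic
under base extension: Γ ⊨ᵅ_{B,n} A iff Γ ⊨ᵅ_{C,n} A for all C ⊇ₙ B.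
`ConsA B Γ A` stands for Γ ⊨ᵅ_{B,n} A; validity of f on B is `ConsA B ∅ f`. -/
theorem stmt_7 (Base : Type) (ext : Base → Base → Prop) (Bn : ℕ → Set Base) (n : ℕ)
    (ConsA : Base → Set Formula → Formula → Prop)
    (extRefl : ∀ B, ext B B)
    (extTrans : ∀ {B C D : Base}, ext D C → ext C B → ext D B)
    -- the admissibility clause for reducibility semantics
    (hAdm : ∀ B ∈ Bn n, ∀ Γ A,
      ConsA B Γ A ↔ ∀ C, ext C B → C ∈ Bn n →
        (∀ f ∈ Γ, ConsA C ∅ f) → ConsA C ∅ A)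
    (B : Base) (hB : B ∈ Bn n) (Γ : Set Formula) (A : Formula) :
    ConsA B Γ A ↔ ∀ C, ext C B → C ∈ Bn n → ConsA C Γ A := by
  constructor
  · intro h C hCB hC
    rw [hAdm C hC]
    intro D hDC hD hvalid
    exact (hAdm B hB Γ A).mp h D (extTrans hDC hCB) hD hvalid
  · intro h
    exact h B (extRefl B) hB
end

section
/- Standard base semantics and reducibility semantics coincide at the level of consequence over a base: Γ ⊨_{B,n} A if and only if Γ ⊨ᵅ_{B,n} A. -/
/-- standard base semantics and reducibility semantics coincide
at the level of consequence over a base: Γ ⊨_{B,n} A iff Γ ⊨ᵅ_{B,n} A.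
`Cons` is standard base-semantics consequence (given by its defining
clauses), `ConsA` is reducibility-semantics consequence (satisfying the
equivalence result (a)-(e) and the admissibility clause (g)). -/
theorem stmt_8 (Base : Type) (ext : Base → Base → Prop) (Bn : ℕ → Set Base) (n : ℕ)
    (deriv : Base → PAtom → Prop)
    (Cons ConsA : Base → Set Formula → Formula → Prop)
    -- standard base semantics: defining clauses
    (hatom : ∀ B a, Cons B ∅ (Formula.atom a) ↔ deriv B a)
    (hconj : ∀ B f g, Cons B ∅ (Formula.conj f g) ↔ Cons B ∅ f ∧ Cons B ∅ g)
    (hdisj : ∀ B f g, Cons B ∅ (Formula.disj f g) ↔ Cons B ∅ f ∨ Cons B ∅ g)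
    (himp : ∀ B f g, Cons B ∅ (Formula.imp f g) ↔ Cons B {f} g)
    (hcons : ∀ B Γ A, Γ ≠ (∅ : Set Formula) →
      (Cons B Γ A ↔ ∀ C, ext C B → C ∈ Bn n →
        (∀ f ∈ Γ, Cons C ∅ f) → Cons C ∅ A))
    -- reducibility semantics: the equivalence result (a)-(e)
    (hAatom : ∀ B a, ConsA B ∅ (Formula.atom a) ↔ deriv B a)
    (hAconj : ∀ B f g, ConsA B ∅ (Formula.conj f g) ↔ ConsA B ∅ f ∧ ConsA B ∅ g)
    (hAdisj : ∀ B f g, ConsA B ∅ (Formula.disj f g) ↔ ConsA B ∅ f ∨ ConsA B ∅ g)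
    (hAimp : ∀ B f g, ConsA B ∅ (Formula.imp f g) ↔ ConsA B {f} g)
    -- reducibility semantics: the admissibility clause (g)
    (hAadm : ∀ B Γ A, Γ ≠ (∅ : Set Formula) →
      (ConsA B Γ A ↔ ∀ C, ext C B → C ∈ Bn n →
        (∀ f ∈ Γ, ConsA C ∅ f) → ConsA C ∅ A))
    (B : Base) (hB : B ∈ Bn n) (Γ : Set Formula) (A : Formula) :
    Cons B Γ A ↔ ConsA B Γ A := by
  have key : ∀ (A : Formula) (B : Base), Cons B ∅ A ↔ ConsA B ∅ A := by
    intro A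
    induction A with
    | atom a => intro B; rw [hatom, hAatom]
    | conj f g ihf ihg => intro B; rw [hconj, hAconj, ihf, ihg]
    | disj f g ihf ihg => intro B; rw [hdisj, hAdisj, ihf, ihg]
    | imp f g ihf ihg =>
      intro B
      rw [himp, hAimp, hcons B {f} g (by simp), hAadm B {f} g (by simp)]
      constructor <;> intro h C hC hCn hf
      · rw [← ihg]; exact h C hC hCn (by simpa [← ihf] using hf)
      · rw [ihg]; exact h C hC hCn (by simpa [ihf] using hf)
  by_cases hΓ : Γ = (∅ : Set Formula)
  · subst hΓ; exact key A B
  · rw [hcons B Γ A hΓ, hAadm B Γ A hΓ]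
    constructor <;> intro h C hC hCn hf
    · rw [← key]; exact h C hC hCn fun f hfΓ => (key f C).mpr (hf f hfΓ)
    · rw [key]; exact h C hC hCn fun f hfΓ => (key f C).mp (hf f hfΓ)
end

section
/- If for all Γ, A, and all extensions C ⊇ₙ B, Sandqvist consequence Γ ⊨ˢ_{C,n} A implies reducibility consequence Γ ⊨ᵅ_{C,n} A, then conversely for all Γ, A, and all C ⊇ₙ B, Γ ⊨ᵅ_{C,n} A implies Γ ⊨ˢ_{C,n} A. -/
/-- Theorem 4: if for all Γ, A and all C ⊇ₙ B Sandqvist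
consequence Γ ⊨ˢ_{C,n} A implies reducibility consequence Γ ⊨ᵅ_{C,n} A, then
conversely, for all Γ, A and all C ⊇ₙ B, Γ ⊨ᵅ_{C,n} A implies Γ ⊨ˢ_{C,n} A.
`ConsA` satisfies the clauses of the equivalence result together with the
admissibility clause; `ConsS` satisfies Sandqvist's clauses (with the
elimination-style disjunction clause). -/
theorem stmt_9 (Base : Type) (ext : Base → Base → Prop) (Bn : ℕ → Set Base) (n : ℕ)
    (deriv : Base → PAtom → Prop)
    (ConsA ConsS : Base → Set Formula → Formula → Prop)
    (extRefl : ∀ B, ext B B)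
    (extTrans : ∀ {B C D : Base}, ext D C → ext C B → ext D B)
    -- reducibility semantics: equivalence result + admissibility clause
    (hAatom : ∀ C a, ConsA C ∅ (Formula.atom a) ↔ deriv C a)
    (hAconj : ∀ C f g, ConsA C ∅ (Formula.conj f g) ↔ ConsA C ∅ f ∧ ConsA C ∅ g)
    (hAdisj : ∀ C f g, ConsA C ∅ (Formula.disj f g) ↔ ConsA C ∅ f ∨ ConsA C ∅ g)
    (hAimp : ∀ C f g, ConsA C ∅ (Formula.imp f g) ↔ ConsA C {f} g)
    (hAadm : ∀ C Γ A, ConsA C Γ A ↔ ∀ C', ext C' C → C' ∈ Bn n →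
      (∀ f ∈ Γ, ConsA C' ∅ f) → ConsA C' ∅ A)
    -- Sandqvist semantics: defining clauses
    (hSatom : ∀ C a, ConsS C ∅ (Formula.atom a) ↔ deriv C a)
    (hSconj : ∀ C f g, ConsS C ∅ (Formula.conj f g) ↔ ConsS C ∅ f ∧ ConsS C ∅ g)
    (hSdisj : ∀ C f g, ConsS C ∅ (Formula.disj f g) ↔
      ∀ C', ext C' C → C' ∈ Bn n → ∀ d : PAtom,
        ConsS C' {f} (Formula.atom d) → ConsS C' {g} (Formula.atom d) →
        ConsS C' ∅ (Formula.atom d))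
    (hSimp : ∀ C f g, ConsS C ∅ (Formula.imp f g) ↔ ConsS C {f} g)
    (hScons : ∀ C Γ A, Γ ≠ (∅ : Set Formula) →
      (ConsS C Γ A ↔ ∀ C', ext C' C → C' ∈ Bn n →
        (∀ f ∈ Γ, ConsS C' ∅ f) → ConsS C' ∅ A))
    (B : Base) (hB : B ∈ Bn n)
    -- hypothesis (1): Sandqvist consequence implies reducibility consequence
    -- on every extension of B
    (h1 : ∀ (Γ : Set Formula) (A : Formula) (C : Base),
      ext C B → C ∈ Bn n → ConsS C Γ A → ConsA C Γ A) :
    ∀ (Γ : Set Formula) (A : Formula) (C : Base),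
      ext C B → C ∈ Bn n → ConsA C Γ A → ConsS C Γ A := by
  -- empty-context case by induction on A
  have key : ∀ (A : Formula) (C : Base), ext C B → C ∈ Bn n →
      ConsA C ∅ A → ConsS C ∅ A := by
    intro A
    induction A with
    | atom a =>
      intro C hCB hC hA
      exact (hSatom C a).mpr ((hAatom C a).mp hA)
    | conj f g ihf ihg =>
      intro C hCB hC hA
      rcases (hAconj C f g).mp hA with ⟨hf, hg⟩
      exact (hSconj C f g).mpr ⟨ihf C hCB hC hf, ihg C hCB hC hg⟩
    | disj f g ihf ihg =>
      intro C hCB hC hA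
      refine (hSdisj C f g).mpr ?_
      intro C' hext hC' d hdf hdg
      have hC'B : ext C' B := extTrans hext hCB
      rcases (hAdisj C f g).mp hA with hf | hg
      · have hf' : ConsA C' ∅ f :=
          (hAadm C ∅ f).mp hf C' hext hC' (by intro x hx; exact absurd hx (Set.notMem_empty x))
        have hsf : ConsS C' ∅ f := ihf C' hC'B hC' hf'
        exact (hScons C' {f} (Formula.atom d) (Set.singleton_ne_empty f)).mp hdf C'
          (extRefl C') hC' (by intro x hx; rw [Set.mem_singleton_iff] at hx; subst hx; exact hsf)
      · have hg' : ConsA C' ∅ g :=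
          (hAadm C ∅ g).mp hg C' hext hC' (by intro x hx; exact absurd hx (Set.notMem_empty x))
        have hsg : ConsS C' ∅ g := ihg C' hC'B hC' hg'
        exact (hScons C' {g} (Formula.atom d) (Set.singleton_ne_empty g)).mp hdg C'
          (extRefl C') hC' (by intro x hx; rw [Set.mem_singleton_iff] at hx; subst hx; exact hsg)
    | imp f g ihf ihg =>
      intro C hCB hC hA
      have hA' : ConsA C {f} g := (hAimp C f g).mp hA
      refine (hSimp C f g).mpr ?_
      refine (hScons C {f} g (Set.singleton_ne_empty f)).mpr ?_
      intro C' hext hC' hprem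
      have hsf : ConsS C' ∅ f := hprem f (Set.mem_singleton f)
      have haf : ConsA C' ∅ f := h1 ∅ f C' (extTrans hext hCB) hC' hsf
      have hag : ConsA C' ∅ g :=
        (hAadm C {f} g).mp hA' C' hext hC'
          (by intro x hx; rw [Set.mem_singleton_iff] at hx; subst hx; exact haf)
      exact ihg C' (extTrans hext hCB) hC' hag
  intro Γ A C hCB hC hA
  rcases eq_or_ne Γ ∅ with rfl | hΓ
  · exact key A C hCB hC hA
  · refine (hScons C Γ A hΓ).mpr ?_
    intro C' hext hC' hprem
    have hC'B : ext C' B := extTrans hext hCB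
    have haA : ConsA C' ∅ A :=
      (hAadm C Γ A).mp hA C' hext hC'
        (fun f hf => h1 ∅ f C' hC'B hC' (hprem f hf))
    exact key A C' hC'B hC' haA
end

section
/- On the disjunction-free fragment of the propositional language, reducibility semantics and Sandqvist base semantics coincide: Γ ⊨ᵅ_{B,n} A if and only if Γ ⊨ˢ_{B,n} A, for all disjunction-free Γ, A, and all bases B of level at most n. -/
/-- A formula is disjunction-free iff no disjunction occurs in it. -/
def DisjFree : Formula → Prop
  | Formula.atom _ => True
  | Formula.conj f g => DisjFree f ∧ DisjFree g
  | Formula.disj _ _ => False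
  | Formula.imp f g => DisjFree f ∧ DisjFree g

/-- on the disjunction-free fragment, reducibility semantics
and Sandqvist base semantics coincide: Γ ⊨ᵅ_{B,n} A iff Γ ⊨ˢ_{B,n} A for all
disjunction-free Γ, A and all bases B of level at most n. The clauses of the
two semantics for atoms, conjunction, implication and consequence are
identical. -/
theorem stmt_10 (Base : Type) (ext : Base → Base → Prop) (Bn : ℕ → Set Base) (n : ℕ)
    (deriv : Base → PAtom → Prop)
    (ConsA ConsS : Base → Set Formula → Formula → Prop)
    (extRefl : ∀ B, ext B B)
    (extTrans : ∀ {B C D : Base}, ext D C → ext C B → ext D B)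
    -- reducibility semantics: equivalence result + admissibility clause
    (hAatom : ∀ C a, ConsA C ∅ (Formula.atom a) ↔ deriv C a)
    (hAconj : ∀ C f g, ConsA C ∅ (Formula.conj f g) ↔ ConsA C ∅ f ∧ ConsA C ∅ g)
    (hAimp : ∀ C f g, ConsA C ∅ (Formula.imp f g) ↔ ConsA C {f} g)
    (hAadm : ∀ C Γ A, ConsA C Γ A ↔ ∀ C', ext C' C → C' ∈ Bn n →
      (∀ f ∈ Γ, ConsA C' ∅ f) → ConsA C' ∅ A)
    -- Sandqvist semantics: defining clauses (disjunction-free fragment)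
    (hSatom : ∀ C a, ConsS C ∅ (Formula.atom a) ↔ deriv C a)
    (hSconj : ∀ C f g, ConsS C ∅ (Formula.conj f g) ↔ ConsS C ∅ f ∧ ConsS C ∅ g)
    (hSimp : ∀ C f g, ConsS C ∅ (Formula.imp f g) ↔ ConsS C {f} g)
    (hScons : ∀ C Γ A, Γ ≠ (∅ : Set Formula) →
      (ConsS C Γ A ↔ ∀ C', ext C' C → C' ∈ Bn n →
        (∀ f ∈ Γ, ConsS C' ∅ f) → ConsS C' ∅ A)) :
    ∀ (Γ : Set Formula) (A : Formula) (B : Base), B ∈ Bn n →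
      (∀ f ∈ Γ, DisjFree f) → DisjFree A →
      (ConsA B Γ A ↔ ConsS B Γ A) := by
  have key : ∀ A : Formula, DisjFree A → ∀ C : Base, ConsA C ∅ A ↔ ConsS C ∅ A := by
    intro A
    induction A with
    | atom a => intro _ C; rw [hAatom, hSatom]
    | conj f g ihf ihg =>
      intro hd C
      rw [hAconj, hSconj, ihf hd.1 C, ihg hd.2 C]
    | disj f g _ _ => intro hd; exact absurd hd id
    | imp f g ihf ihg =>
      intro hd C
      rw [hAimp, hSimp, hAadm, hScons C {f} g (by simp)]
      constructor
      · intro h C' he hb hf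
        rw [← ihg hd.2]
        exact h C' he hb (fun x hx => by
          rw [Set.mem_singleton_iff] at hx
          rw [hx, ihf hd.1]; exact hf f rfl)
      · intro h C' he hb hf
        rw [ihg hd.2]
        exact h C' he hb (fun x hx => by
          rw [Set.mem_singleton_iff] at hx
          rw [hx, ← ihf hd.1]; exact hf f rfl)
  intro Γ A B _ hΓ hA
  rcases eq_or_ne Γ ∅ with rfl | hne
  · exact key A hA B
  · rw [hAadm, hScons B Γ A hne]
    constructor
    · intro h C' he hb hf
      rw [← key A hA]
      exact h C' he hb (fun f hfΓ => by rw [key f (hΓ f hfΓ)]; exact hf f hfΓ)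
    · intro h C' he hb hf
      rw [key A hA]
      exact h C' he hb (fun f hfΓ => by rw [← key f (hΓ f hfΓ)]; exact hf f hfΓ)
end

section
/- If the generalised disjunction property holds on every atomic base (i.e., for disjunction-free Γ, Γ ⊨_B A∨B implies Γ ⊨_B A or Γ ⊨_B B), and intuitionistic logic is sound for ⊨, then Harrop's rule is valid: for all bases B, ⊨_B (¬A → B∨C) → ((¬A → B) ∨ (¬A → C)). -/
/-- ¬A := A → ⊥ -/
def Formula.neg (A : Formula) : Formula := Formula.imp A (Formula.atom PAtom.bot)

/-- Theorem 6: if the generalised disjunction property holds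
on every atomic base and intuitionistic logic is sound for ⊨, then Harrop's
rule is valid: on every base B, ⊨_B (¬A → B∨C) → ((¬A → B) ∨ (¬A → C)). -/
theorem stmt_11 (Base : Type) (ext : Base → Base → Prop)
    (Cons : Base → Set Formula → Formula → Prop)
    (DerIL : Set Formula → Formula → Prop)
    (extRefl : ∀ B, ext B B)
    (extTrans : ∀ {B C D : Base}, ext D C → ext C B → ext D B)
    -- defining clause for consequence from nonempty Γ
    (hcons : ∀ B Γ A, Γ ≠ (∅ : Set Formula) →
      (Cons B Γ A ↔ ∀ C, ext C B → (∀ f ∈ Γ, Cons C ∅ f) → Cons C ∅ A))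
    -- clause for implication
    (himp : ∀ B f g, Cons B ∅ (Formula.imp f g) ↔ Cons B {f} g)
    -- clause for disjunction
    (hdisj : ∀ B f g, Cons B ∅ (Formula.disj f g) ↔ Cons B ∅ f ∨ Cons B ∅ g)
    -- the generalised disjunction property on every base
    (hGDP : ∀ B Γ f g, (∀ h ∈ Γ, DisjFree h) →
      Cons B Γ (Formula.disj f g) → Cons B Γ f ∨ Cons B Γ g)
    -- soundness of intuitionistic logic for ⊨
    (hSound : ∀ Γ A, DerIL Γ A → ∀ B, Cons B Γ A)
    -- for every A there is a disjunction-free A* intuitionistically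
    -- interderivable with ¬A
    (hDF : ∀ A : Formula, ∃ A', DisjFree A' ∧
      DerIL {A.neg} A' ∧ DerIL {A'} A.neg) :
    ∀ (B : Base) (A f g : Formula),
      Cons B ∅ (Formula.imp (Formula.imp A.neg (Formula.disj f g))
        (Formula.disj (Formula.imp A.neg f) (Formula.imp A.neg g))) := by

  intro B A f g
  obtain ⟨A', hA'df, hder1, hder2⟩ := hDF A
  have hne : ({Formula.imp A.neg (Formula.disj f g)} : Set Formula) ≠ ∅ :=
    Set.singleton_ne_empty _
  rw [himp, hcons _ _ _ hne]
  intro C hCB hprem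
  have hhyp : Cons C ∅ (Formula.imp A.neg (Formula.disj f g)) :=
    hprem _ (Set.mem_singleton _)
  -- key: Cons C {A'} (f ∨ g)
  have hstar : Cons C {A'} (Formula.disj f g) := by
    rw [hcons _ _ _ (Set.singleton_ne_empty _)]
    intro D hDC hD
    have hDA' : Cons D ∅ A' := hD _ (Set.mem_singleton _)
    -- get Cons D ∅ A.neg
    have hnegA : Cons D ∅ A.neg := by
      have := hSound _ _ hder2 D
      rw [hcons _ _ _ (Set.singleton_ne_empty _)] at this
      exact this D (extRefl D) (by intro x hx; rw [Set.mem_singleton_iff] at hx; subst hx; exact hDA')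
    have := (himp C A.neg (Formula.disj f g)).mp hhyp
    rw [hcons _ _ _ (Set.singleton_ne_empty _)] at this
    exact this D hDC (by intro x hx; rw [Set.mem_singleton_iff] at hx; subst hx; exact hnegA)
  have hdf : ∀ h ∈ ({A'} : Set Formula), DisjFree h := by
    intro x hx; rw [Set.mem_singleton_iff] at hx; subst hx; exact hA'df
  have key : ∀ h : Formula, Cons C {A'} h → Cons C ∅ (Formula.imp A.neg h) := by
    intro h hCh
    rw [himp, hcons _ _ _ (Set.singleton_ne_empty _)]
    intro D hDC hD
    have hDneg : Cons D ∅ A.neg := hD _ (Set.mem_singleton _)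
    have hDA' : Cons D ∅ A' := by
      have := hSound _ _ hder1 D
      rw [hcons _ _ _ (Set.singleton_ne_empty _)] at this
      exact this D (extRefl D) (by intro x hx; rw [Set.mem_singleton_iff] at hx; subst hx; exact hDneg)
    rw [hcons _ _ _ (Set.singleton_ne_empty _)] at hCh
    exact hCh D hDC (by intro x hx; rw [Set.mem_singleton_iff] at hx; subst hx; exact hDA')
  rcases hGDP C {A'} f g hdf hstar with hf | hg
  · exact (hdisj _ _ _).mpr (Or.inl (key f hf))
  · exact (hdisj _ _ _).mpr (Or.inr (key g hg))
end

section
/- If the consequence relation ⊨ enjoys the import principle (for every base B and disjunction-free Γ there is a disjunction-free Δ with ⊨_{B ∪ Δ°} A iff Γ ⊨_B A), then the generalised disjunction property holds on every base: for disjunction-free Γ, Γ ⊨_B A∨B implies Γ ⊨_B A or Γ ⊨_B B. -/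
/-- Theorem 7: if ⊨ enjoys the import principle, then the
generalised disjunction property holds on every base. `extend B Δ` denotes
the base B ∪ Δ° obtained by adding to B the atomic rules translating the
disjunction-free formulas of Δ. -/
theorem stmt_12 (Base : Type)
    (Cons : Base → Set Formula → Formula → Prop)
    (extend : Base → Set Formula → Base)
    -- the import principle: for every base B and disjunction-free Γ there is
    -- a disjunction-free Δ such that ⊨_{B∪Δ°} A iff Γ ⊨_B A
    (hImport : ∀ B (Γ : Set Formula), (∀ f ∈ Γ, DisjFree f) →
      ∃ Δ : Set Formula, (∀ f ∈ Δ, DisjFree f) ∧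
        ∀ A, (Cons (extend B Δ) ∅ A ↔ Cons B Γ A))
    -- validity clause for disjunction
    (hdisj : ∀ B f g, Cons B ∅ (Formula.disj f g) ↔ Cons B ∅ f ∨ Cons B ∅ g) :
    ∀ (B : Base) (Γ : Set Formula) (f g : Formula),
      (∀ h ∈ Γ, DisjFree h) →
      Cons B Γ (Formula.disj f g) → Cons B Γ f ∨ Cons B Γ g := by
  intro B Γ f g hΓ hcons
  obtain ⟨Δ, -, hΔ⟩ := hImport B Γ hΓ
  have := (hdisj (extend B Δ) f g).mp ((hΔ _).mpr hcons)
  rcases this with h | h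
  · exact Or.inl ((hΔ f).mp h)
  · exact Or.inr ((hΔ g).mp h)
end

section
/- Intuitionistic logic is base-complete over a proof-theoretic consequence relation ⊨ₙ if and only if ⊨ₙ enjoys the compact export principle and IL is complete over ⊨ₙ. -/
/-- Theorem 18: IL is base-complete over ⊨ₙ iff ⊨ₙ enjoys the
compact export principle and IL is complete over ⊨ₙ.
`Cons B Γ A` is Γ ⊨_{B,n} A; Γ ⊨ₙ A is `∀ B ∈ Bn n, Cons B Γ A`;
`DerILB B Γ A` is Γ ⊢_{IL∪B} A; `DerIL Γ A` is Γ ⊢_IL A; and `starB B` is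
B*, the set of disjunction-free formula translations of the rules of B. -/
theorem stmt_18 (Base : Type) (Bn : ℕ → Set Base) (n : ℕ)
    (Cons : Base → Set Formula → Formula → Prop)
    (DerILB : Base → Set Formula → Formula → Prop)
    (DerIL : Set Formula → Formula → Prop)
    (starB : Base → Set Formula)
    (emptyBase : Base)
    (hEmptyLevel : emptyBase ∈ Bn n)
    -- derivability in IL∪B∅ coincides with derivability in IL
    (hDerEmpty : ∀ Γ A, DerIL Γ A ↔ DerILB emptyBase Γ A)
    -- logical consequence equals consequence over the empty base
    (hLogEmpty : ∀ Γ A, Cons emptyBase Γ A ↔ ∀ B ∈ Bn n, Cons B Γ A)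
    -- base-soundness of IL over ⊨ₙ
    (hBaseSound : ∀ B ∈ Bn n, ∀ Γ A, DerILB B Γ A → Cons B Γ A)
    -- compact export lemma for IL-derivability
    (hCompactExportIL : ∀ B ∈ Bn n, ∀ Γ A,
      DerILB B Γ A ↔ ∃ Δ : Set Formula, Δ ⊆ starB B ∧ Δ.Finite ∧
        DerIL (Γ ∪ Δ) A) :
    -- base-completeness of IL over ⊨ₙ ...
    (∀ B ∈ Bn n, ∀ Γ A, Cons B Γ A → DerILB B Γ A) ↔
      -- ... iff ⊨ₙ enjoys the compact export principle ...
      ((∀ B ∈ Bn n, ∀ Γ A, Cons B Γ A ↔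
          ∃ Δ : Set Formula, Δ ⊆ starB B ∧ Δ.Finite ∧
            ∀ C ∈ Bn n, Cons C (Γ ∪ Δ) A) ∧
        -- ... and IL is complete over ⊨ₙ
        (∀ Γ A, (∀ B ∈ Bn n, Cons B Γ A) → DerIL Γ A)) := by
  constructor
  · intro BC
    constructor
    · intro B hB Γ A
      constructor
      · intro h
        obtain ⟨Δ, hΔ, hfin, hder⟩ := (hCompactExportIL B hB Γ A).1 (BC B hB Γ A h)
        exact ⟨Δ, hΔ, hfin, (hLogEmpty _ _).1 (hBaseSound _ hEmptyLevel _ _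
          ((hDerEmpty _ _).1 hder))⟩
      · rintro ⟨Δ, hΔ, hfin, hcons⟩
        have h1 : DerIL (Γ ∪ Δ) A :=
          (hDerEmpty _ _).2 (BC _ hEmptyLevel _ _ ((hLogEmpty _ _).2 hcons))
        exact hBaseSound B hB Γ A ((hCompactExportIL B hB Γ A).2 ⟨Δ, hΔ, hfin, h1⟩)
    · intro Γ A h
      exact (hDerEmpty _ _).2 (BC _ hEmptyLevel _ _ ((hLogEmpty _ _).2 h))
  · rintro ⟨CE, comp⟩ B hB Γ A h
    obtain ⟨Δ, hΔ, hfin, hcons⟩ := (CE B hB Γ A).1 h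
    exact (hCompactExportIL B hB Γ A).2 ⟨Δ, hΔ, hfin, comp _ _ hcons⟩
end
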